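/- For all sequential propositional statements P, Q, R, se((P ∧' Q) ∨' (R ∧' F)) = se((P ∨' (R ∧' F)) ∧' (Q ∨' (R ∧' F))), i.e., the restricted right-distributivity axiom F10 of EqFSCL is valid in the evaluation-tree semantics. -/

import Mathlib

inductive ETree (A : Type*) : Type _
  | T : ETree A
  | F : ETree A
  | node : ETree A → A → ETree A → ETree A

/-- Leaf replacement: `X.repl Y Z = X[T↦Y, F↦Z]`. -/
def ETree.repl {A : Type*} : ETree A → ETree A → ETree A → ETree A
  | .T, y, _ => y
  | .F, _, z => z
  | .node l a r, y, z => .node (l.repl y z) a (r.repl y z)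
inductive SeqProp (A : Type*) : Type _
  | atom : A → SeqProp A
  | T : SeqProp A
  | F : SeqProp A
  | neg : SeqProp A → SeqProp A
  | and : SeqProp A → SeqProp A → SeqProp A
  | or : SeqProp A → SeqProp A → SeqProp A

/-- Short-circuit evaluation function. -/
def se {A : Type*} : SeqProp A → ETree A
  | .T => .T
  | .F => .F
  | .atom a => .node .T a .F
  | .neg P => (se P).repl .F .T
  | .and P Q => (se P).repl (se Q) .F
  | .or P Q => (se P).repl .T (se Q)

theorem ETree.repl_repl {A : Type*} (x y z u v : ETree A) :
    (x.repl y z).repl u v = x.repl (y.repl u v) (z.repl u v) := by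
  induction x with
  | T => rfl
  | F => rfl
  | node l a r ihl ihr => simp only [ETree.repl, ihl, ihr]

/-- Both sides equal `se P [T ↦ se Q [F ↦ X], F ↦ X]` with `X = se R [T ↦ F, F ↦ F]`; the key point is
that `X` has only `F`-leaves, so `X [T ↦ Y, F ↦ F] = X` for every `Y`. -/
theorem se_F10 {A : Type*} (P Q R : SeqProp A) :
    se (SeqProp.or (SeqProp.and P Q) (SeqProp.and R SeqProp.F))
      = se (SeqProp.and (SeqProp.or P (SeqProp.and R SeqProp.F))
            (SeqProp.or Q (SeqProp.and R SeqProp.F))) := by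
  simp only [se, ETree.repl_repl, ETree.repl]
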